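/- arXiv:2101.09383 — 5 statements merged into one kernel-verified Lean document; each statement's English description precedes it below -/
import Mathlib

section
/- In the Lightning Model, the probability that the origin weakly percolates (there exist infinitely many vertices reachable from 0 by open directed paths) equals the probability that infinitely many vertices have an open directed path to 0. -/
open MeasureTheory

/-- Two vertices of `ℤ²` are nearest neighbors. -/
def LatticeAdj (a b : ℤ × ℤ) : Prop :=
  (a.1 - b.1).natAbs + (a.2 - b.2).natAbs = 1

/-- The directed edge from `a` to a nearest neighbor `b` is `ε`-open iff `φ b < φ a + ε`. -/
def EdgeOpen (φ : ℤ × ℤ → ℝ) (ε : ℝ) (a b : ℤ × ℤ) : Prop :=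
  LatticeAdj a b ∧ φ b < φ a + ε

/-- There is an open directed path from `a` to `b` in the configuration `f_ε(φ)`. -/
def Reaches (φ : ℤ × ℤ → ℝ) (ε : ℝ) (a b : ℤ × ℤ) : Prop :=
  Relation.ReflTransGen (EdgeOpen φ ε) a b

/-!
The reflection `φ ↦ 1 - φ` of the potentials preserves the i.i.d. uniform law, and it turns
every `ε`-open edge `a → b` into the `ε`-open edge `b → a`. Hence it exchanges the event that
infinitely many vertices are reachable from the origin with the event that infinitely many
vertices reach the origin, so the two events have the same probability.
-/

lemma latticeAdj_comm {a b : ℤ × ℤ} : LatticeAdj a b ↔ LatticeAdj b a := by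
  unfold LatticeAdj
  omega

lemma edgeOpen_one_sub_iff {φ : ℤ × ℤ → ℝ} {ε : ℝ} {a b : ℤ × ℤ} :
    EdgeOpen (1 - φ) ε a b ↔ EdgeOpen φ ε b a := by
  simp only [EdgeOpen, Pi.sub_apply, Pi.one_apply, latticeAdj_comm (a := a)]
  constructor <;> rintro ⟨hadj, hlt⟩ <;> exact ⟨hadj, by linarith⟩

lemma reaches_one_sub_iff {φ : ℤ × ℤ → ℝ} {ε : ℝ} {a b : ℤ × ℤ} :
    Reaches (1 - φ) ε a b ↔ Reaches φ ε b a := by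
  have hswap : EdgeOpen (1 - φ) ε = Function.swap (EdgeOpen φ ε) := by
    ext x y
    exact edgeOpen_one_sub_iff
  rw [Reaches, hswap, Relation.reflTransGen_swap, Reaches]

lemma map_one_sub_volume_restrict_Icc :
    (volume.restrict (Set.Icc (0 : ℝ) 1)).map (fun x => 1 - x)
      = volume.restrict (Set.Icc (0 : ℝ) 1) := by
  have hpre : (fun x : ℝ => 1 - x) ⁻¹' Set.Icc 0 1 = Set.Icc 0 1 := by
    ext x
    simp only [Set.mem_preimage, Set.mem_Icc]
    constructor <;> rintro ⟨h₀, h₁⟩ <;> constructor <;> linarith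
  conv_lhs => rw [← hpre]
  rw [← Measure.restrict_map (by fun_prop) measurableSet_Icc, Measure.map_sub_left_eq_self]

theorem map_pi_eq_self_of_iIndepFun {ι X : Type*} [MeasurableSpace X]
    {μ : Measure (ι → X)} (hindep : ProbabilityTheory.iIndepFun (fun i (φ : ι → X) => φ i) μ)
    {f : X → X} (hf : Measurable f)
    (hmarg : ∀ i, (μ.map (fun φ => φ i)).map f = μ.map (fun φ => φ i)) :
    μ.map (fun φ i => f (φ i)) = μ := by
  have := hindep.isProbabilityMeasure
  have : ∀ i, IsProbabilityMeasure (μ.map (fun φ => φ i)) := fun i =>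
    Measure.isProbabilityMeasure_map (measurable_pi_apply i).aemeasurable
  have hprod : μ = Measure.infinitePi (fun i => μ.map (fun φ => φ i)) := by
    simpa using hindep.map_fun_eq_infinitePi_map (fun i => measurable_pi_apply i)
  conv_lhs => rw [hprod]
  rw [Measure.infinitePi_map_pi _ (fun _ => hf)]
  simp_rw [hmarg]
  exact hprod.symm

theorem prob_weakPerc_eq_prob_attract_general
    (μ : Measure ((ℤ × ℤ) → ℝ))
    (hindep : ProbabilityTheory.iIndepFun
      (fun (a : ℤ × ℤ) (φ : (ℤ × ℤ) → ℝ) => φ a) μ)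
    (hunif : ∀ a : ℤ × ℤ, μ.map (fun φ => φ a) = volume.restrict (Set.Icc (0 : ℝ) 1))
    (ε : ℝ) :
    μ {φ | {b : ℤ × ℤ | Reaches φ ε 0 b}.Infinite}
      = μ {φ | {b : ℤ × ℤ | Reaches φ ε b 0}.Infinite} := by
  -- As a measurable equivalence, `reflect` transports `μ` on all sets, measurable or not.
  let reflect : ((ℤ × ℤ) → ℝ) ≃ᵐ ((ℤ × ℤ) → ℝ) := MeasurableEquiv.subLeft 1
  have hreflect : μ.map reflect = μ :=
    map_pi_eq_self_of_iIndepFun hindep (f := fun x => 1 - x) (by fun_prop)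
      (fun a => by rw [hunif, map_one_sub_volume_restrict_Icc])
  have hpre : reflect ⁻¹' {φ | {b : ℤ × ℤ | Reaches φ ε b 0}.Infinite}
      = {φ | {b : ℤ × ℤ | Reaches φ ε 0 b}.Infinite} := by
    ext φ
    change {b | Reaches (1 - φ) ε b 0}.Infinite ↔ _
    simp only [reaches_one_sub_iff, Set.mem_ofPred_eq]
  rw [← hpre, ← reflect.map_apply, hreflect]

/-- In the Lightning Model (vertex potentials i.i.d. uniform on `[0,1]`), the probability
that infinitely many vertices are reachable from the origin equals the probability
that infinitely many vertices reach the origin. -/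
theorem prob_weakPerc_eq_prob_attract
    (μ : Measure ((ℤ × ℤ) → ℝ)) [IsProbabilityMeasure μ]
    (hindep : ProbabilityTheory.iIndepFun
      (fun (a : ℤ × ℤ) (φ : (ℤ × ℤ) → ℝ) => φ a) μ)
    (hunif : ∀ a : ℤ × ℤ, μ.map (fun φ => φ a) = volume.restrict (Set.Icc (0 : ℝ) 1))
    (ε : ℝ) (hε : ε ∈ Set.Icc (0 : ℝ) 1) :
    μ {φ | {b : ℤ × ℤ | Reaches φ ε 0 b}.Infinite}
      = μ {φ | {b : ℤ × ℤ | Reaches φ ε b 0}.Infinite} :=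
  prob_weakPerc_eq_prob_attract_general μ hindep hunif ε
end

section
/- Fix ε ∈ (0,1), M = ⌈1/ε⌉, s_j = 1 − jε, and the basis functions h_{j,i}(x) = (x − s_{j+1})^i · 1_{I_j}(x). For 0 ≤ j < M−1 and 0 ≤ i ≤ j, the operator L^ε f(x) = ∫_0^{min(x+ε,1)} f(t) dt satisfies L^ε h_{j,i} = (1/(i+1)) ( ∑_{k=0}^{j} ε^{i+1} h_{k,0} + h_{j+1,i+1} ). -/
/-- `s_j = 1 - jε`. -/
noncomputable def sPt (ε : ℝ) (j : ℕ) : ℝ := 1 - (j : ℝ) * ε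

/-- For `M = ⌈1/ε⌉`: `I_j = (s_{j+1}, s_j]` for `j ≤ M-2`, and `I_{M-1} = [0, s_{M-1}]`. -/
noncomputable def Ij (ε : ℝ) (j : ℕ) : Set ℝ :=
  if j = ⌈1 / ε⌉₊ - 1 then Set.Icc 0 (sPt ε (⌈1 / ε⌉₊ - 1))
  else Set.Ioc (sPt ε (j + 1)) (sPt ε j)

/-- The basis functions `h_{j,i}(x) = (x - s_{j+1})^i · 1_{I_j}(x)`. -/
noncomputable def hBasis (ε : ℝ) (j i : ℕ) (x : ℝ) : ℝ :=
  (x - sPt ε (j + 1)) ^ i * (Ij ε j).indicator (fun _ => (1 : ℝ)) x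

/-- The operator `L^ε f(x) = ∫_0^{min(x+ε,1)} f(t) dt`. -/
noncomputable def Lop (ε : ℝ) (f : ℝ → ℝ) (x : ℝ) : ℝ :=
  ∫ t in (0 : ℝ)..(min (x + ε) 1), f t

/-!
On `[0,1]` the right-hand side is read off from the position of `x + ε` relative to the support
`(s_{j+1}, s_j]` of `h_{j,i}`: below it the integral vanishes, inside it the integral is
`(x - s_{j+2})^{i+1}/(i+1)`, which is `h_{j+1,i+1}/(i+1)` since `I_{j+1}` ends at `s_{j+1}`, and
above it the integral is the full `ε^{i+1}/(i+1)`, which the telescoping sum of indicators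
`∑_{k ≤ j} h_{k,0} = 1_{(s_{j+1},1]}` records.
-/

open Set

lemma sum_indicator_Ioc_of_antitone {f : ℕ → ℝ} (hf : Antitone f) (n : ℕ) (x : ℝ) :
    ∑ k ∈ Finset.range n, (Ioc (f (k + 1)) (f k)).indicator (fun _ => (1 : ℝ)) x
      = (Ioc (f n) (f 0)).indicator (fun _ => 1) x := by
  induction n with
  | zero => simp
  | succ n ih =>
    rw [Finset.sum_range_succ, ih, add_comm, ← Ioc_union_Ioc_eq_Ioc (hf n.le_succ) (hf n.zero_le),
      indicator_union_of_disjoint (Ioc_disjoint_Ioc_of_le le_rfl)]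

lemma intervalIntegral_indicator_Ioc_sub_pow {a b c u : ℝ} (hca : c ≤ a) (hcu : c ≤ u) (i : ℕ) :
    ∫ t in c..u, (Ioc a b).indicator (fun t => (t - a) ^ i) t
      = (max a (min u b) - a) ^ (i + 1) / (i + 1) := by
  rw [intervalIntegral.integral_of_le hcu, MeasureTheory.setIntegral_indicator measurableSet_Ioc,
    Ioc_inter_Ioc, max_eq_right hca]
  rcases le_or_gt a (min u b) with h | h
  · rw [← intervalIntegral.integral_of_le h, intervalIntegral.integral_comp_sub_right
      (fun t => t ^ i) a, max_eq_right h]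
    simp [integral_pow]
  · rw [Ioc_eq_empty (not_lt.mpr h.le), max_eq_left h.le]
    simp

section

variable {ε : ℝ}

lemma sPt_zero (ε : ℝ) : sPt ε 0 = 1 := by simp [sPt]

lemma sPt_succ (ε : ℝ) (k : ℕ) : sPt ε (k + 1) = sPt ε k - ε := by
  simp only [sPt]; push_cast; ring

lemma sPt_antitone (hε : 0 ≤ ε) : Antitone (sPt ε) := fun m n hmn => by
  simp only [sPt]; gcongr

lemma sPt_le_one (hε : 0 ≤ ε) (k : ℕ) : sPt ε k ≤ 1 :=
  sPt_zero ε ▸ sPt_antitone hε k.zero_le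

lemma sPt_pos_of_lt_ceil (hε : 0 < ε) {k : ℕ} (hk : k < ⌈1 / ε⌉₊) : 0 < sPt ε k := by
  have : (k : ℝ) * ε < 1 := (lt_div_iff₀ hε).mp (by simpa using Nat.lt_ceil.mp hk)
  simp only [sPt]; linarith

lemma sPt_nonpos_of_ceil_le (hε : 0 < ε) {k : ℕ} (hk : ⌈1 / ε⌉₊ ≤ k) : sPt ε k ≤ 0 := by
  have : 1 ≤ (k : ℝ) * ε := (div_le_iff₀ hε).mp (Nat.ceil_le.mp hk)
  simp only [sPt]; linarith

lemma Ij_of_ne {j : ℕ} (hj : j ≠ ⌈1 / ε⌉₊ - 1) : Ij ε j = Ioc (sPt ε (j + 1)) (sPt ε j) :=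
  if_neg hj

lemma Ij_subset_Iic (ε : ℝ) (j : ℕ) : Ij ε j ⊆ Iic (sPt ε j) := by
  unfold Ij
  split_ifs with h
  · exact h ▸ Icc_subset_Iic_self
  · exact Ioc_subset_Iic_self

lemma hBasis_eq_indicator (ε : ℝ) (j i : ℕ) :
    hBasis ε j i = (Ij ε j).indicator (fun x => (x - sPt ε (j + 1)) ^ i) := by
  ext x
  by_cases hx : x ∈ Ij ε j <;> simp [hBasis, hx]

lemma hBasis_of_lt {j : ℕ} (i : ℕ) {x : ℝ} (hx : sPt ε j < x) : hBasis ε j i x = 0 := by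
  rw [hBasis_eq_indicator, indicator_of_notMem fun h => (Ij_subset_Iic ε j h).not_gt hx]

/-- On the last interval `I_{M-1} = [0, s_{M-1}]` the formula holds because `s_M ≤ 0`. -/
lemma hBasis_pow_succ_of_le (hε : 0 < ε) {k : ℕ} (i : ℕ) {x : ℝ} (hx0 : 0 ≤ x)
    (hxk : x ≤ sPt ε k) : hBasis ε k (i + 1) x = max (x - sPt ε (k + 1)) 0 ^ (i + 1) := by
  rw [hBasis_eq_indicator]
  by_cases hk : k = ⌈1 / ε⌉₊ - 1
  · have hs : sPt ε (k + 1) ≤ 0 := sPt_nonpos_of_ceil_le hε (by omega)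
    rw [Ij, if_pos hk, indicator_of_mem (mem_Icc.2 ⟨hx0, hk ▸ hxk⟩), max_eq_left (by linarith)]
  rw [Ij_of_ne hk]
  rcases lt_or_ge (sPt ε (k + 1)) x with hxs | hxs
  · rw [indicator_of_mem (mem_Ioc.2 ⟨hxs, hxk⟩), max_eq_left (by linarith)]
  · rw [indicator_of_notMem fun h => h.1.not_ge hxs, max_eq_right (by linarith),
      zero_pow i.succ_ne_zero]

lemma sum_hBasis_zero (hε : 0 < ε) {j : ℕ} (hj : j + 1 < ⌈1 / ε⌉₊) (x : ℝ) :
    ∑ k ∈ Finset.range (j + 1), hBasis ε k 0 x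
      = (Ioc (sPt ε (j + 1)) 1).indicator (fun _ => 1) x := by
  have hsum := sum_indicator_Ioc_of_antitone (sPt_antitone hε.le) (j + 1) x
  rw [sPt_zero] at hsum
  rw [← hsum]
  refine Finset.sum_congr rfl fun k hk => ?_
  rw [Finset.mem_range] at hk
  simp [hBasis, Ij_of_ne (show k ≠ ⌈1 / ε⌉₊ - 1 by omega)]

lemma Lop_hBasis (hε : 0 < ε) {j : ℕ} (hj : j + 1 < ⌈1 / ε⌉₊) (i : ℕ) {x : ℝ} (hx : 0 ≤ x) :
    Lop ε (hBasis ε j i) x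
      = (max (sPt ε (j + 1)) (min (x + ε) (sPt ε j)) - sPt ε (j + 1)) ^ (i + 1) / (i + 1) := by
  have ha : 0 ≤ sPt ε (j + 1) := (sPt_pos_of_lt_ceil hε hj).le
  rw [Lop, hBasis_eq_indicator, Ij_of_ne (by omega),
    intervalIntegral_indicator_Ioc_sub_pow ha (le_min (by linarith) zero_le_one), min_assoc,
    min_eq_right (sPt_le_one hε.le j)]

end

theorem Lop_hBasis_inner_general (ε : ℝ) (hε : ε ∈ Set.Ioo (0 : ℝ) 1) (j i : ℕ)
    (hj : j < ⌈1 / ε⌉₊ - 1) (x : ℝ) (hx : x ∈ Set.Icc (0 : ℝ) 1) :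
    Lop ε (hBasis ε j i) x
      = (1 / ((i : ℝ) + 1)) *
        ((∑ k ∈ Finset.range (j + 1), ε ^ (i + 1) * hBasis ε k 0 x)
          + hBasis ε (j + 1) (i + 1) x) := by
  have hε0 : 0 < ε := hε.1
  have hj' : j + 1 < ⌈1 / ε⌉₊ := by omega
  rw [Lop_hBasis hε0 hj' i hx.1, ← Finset.mul_sum, sum_hBasis_zero hε0 hj',
    show sPt ε j = sPt ε (j + 1) + ε by rw [sPt_succ]; ring]
  rcases le_or_gt x (sPt ε (j + 1)) with hxa | hxa
  · rw [indicator_of_notMem fun h => h.1.not_ge hxa, hBasis_pow_succ_of_le hε0 i hx.1 hxa,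
      sPt_succ ε (j + 1), min_eq_left (by linarith), ← max_sub_sub_right, sub_self, max_comm 0,
      sub_sub_eq_add_sub]
    ring
  · rw [indicator_of_mem (mem_Ioc.2 ⟨hxa, hx.2⟩), hBasis_of_lt _ hxa, min_eq_right (by linarith),
      max_eq_right (by linarith)]
    ring

/-- For `0 ≤ j < M-1` and `0 ≤ i ≤ j`,
`L^ε h_{j,i} = (1/(i+1)) (∑_{k=0}^{j} ε^{i+1} h_{k,0} + h_{j+1,i+1})` on `[0,1]`. -/
theorem Lop_hBasis_inner (ε : ℝ) (hε : ε ∈ Set.Ioo (0 : ℝ) 1) (j i : ℕ)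
    (hj : j < ⌈1 / ε⌉₊ - 1) (hi : i ≤ j) (x : ℝ) (hx : x ∈ Set.Icc (0 : ℝ) 1) :
    Lop ε (hBasis ε j i) x
      = (1 / ((i : ℝ) + 1)) *
        ((∑ k ∈ Finset.range (j + 1), ε ^ (i + 1) * hBasis ε k 0 x)
          + hBasis ε (j + 1) (i + 1) x) :=
  Lop_hBasis_inner_general ε hε j i hj x hx
end

section
/- With notation as above, for the outermost interval case j = M−1: L^ε h_{M−1,i} is the constant function (ε^{i+1} − (Mε−1)^{i+1})/(i+1) on [0,1], i.e., equals that constant times ∑_{k=0}^{M−1} h_{k,0}. -/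
/-!
The intervals `I_0, …, I_{M-1}` partition `[0, 1]`: the point `x` lies in `I_k` exactly for
`k = min ⌊(1 - x)/ε⌋ (M - 1)`, so `∑ₖ h_{k,0} = 1` there. Since `s_{M-1} ≤ ε`, the upper limit
`min (x + ε) 1` of `L^ε` is never below `s_{M-1}`, so `L^ε h_{M-1,i} x` is the
full integral `∫₀^{s_{M-1}} (t - s_M)^i dt`, with `s_{M-1} - s_M = ε` and `-s_M = Mε - 1`.
-/

open Set

lemma one_le_natCeil_one_div {ε : ℝ} (hε : 0 < ε) : 1 ≤ ⌈1 / ε⌉₊ :=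
  Nat.one_le_iff_ne_zero.mpr (Nat.ceil_pos.mpr (by positivity)).ne'

lemma sPt_sub_sPt_succ (ε : ℝ) (j : ℕ) : sPt ε j - sPt ε (j + 1) = ε := by
  simp only [sPt]; push_cast; ring

lemma sPt_natCeil_pred_mem_Icc {ε : ℝ} (hε : 0 < ε) :
    sPt ε (⌈1 / ε⌉₊ - 1) ∈ Icc 0 ε := by
  have hceil_le : 1 / ε ≤ ⌈1 / ε⌉₊ := Nat.le_ceil _
  have hceil_lt : (⌈1 / ε⌉₊ : ℝ) < 1 / ε + 1 := Nat.ceil_lt_add_one (by positivity)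
  rw [div_le_iff₀ hε] at hceil_le
  have hpred_lt : ((⌈1 / ε⌉₊ : ℝ) - 1) * ε < 1 := by
    rwa [← lt_div_iff₀ hε, sub_lt_iff_lt_add]
  simp only [sPt, Nat.cast_pred (one_le_natCeil_one_div hε), mem_Icc]
  constructor <;> linarith

lemma le_sPt_iff_le_floor {ε x : ℝ} (hε : 0 < ε) (hx : x ≤ 1) (k : ℕ) :
    x ≤ sPt ε k ↔ k ≤ ⌊(1 - x) / ε⌋₊ := by
  rw [Nat.le_floor_iff (div_nonneg (by linarith) hε.le), le_div_iff₀ hε, sPt]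
  constructor <;> intro h <;> linarith

lemma mem_Ij_iff {ε x : ℝ} (hε : 0 < ε) (hx : x ∈ Icc (0 : ℝ) 1) {k : ℕ}
    (hk : k ≤ ⌈1 / ε⌉₊ - 1) : x ∈ Ij ε k ↔ k = min ⌊(1 - x) / ε⌋₊ (⌈1 / ε⌉₊ - 1) := by
  have hle := le_sPt_iff_le_floor hε hx.2
  unfold Ij
  split_ifs with hlast
  · rw [mem_Icc, hle]
    simp only [hx.1, true_and]
    omega
  · rw [mem_Ioc, ← not_le, hle, hle]
    omega

lemma sum_hBasis_zero_eq_one {ε x : ℝ} (hε : 0 < ε) (hx : x ∈ Icc (0 : ℝ) 1) :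
    ∑ k ∈ Finset.range ⌈1 / ε⌉₊, hBasis ε k 0 x = 1 := by
  have hM := one_le_natCeil_one_div hε
  calc ∑ k ∈ Finset.range ⌈1 / ε⌉₊, hBasis ε k 0 x
      = ∑ k ∈ Finset.range ⌈1 / ε⌉₊,
          if k = min ⌊(1 - x) / ε⌋₊ (⌈1 / ε⌉₊ - 1) then 1 else 0 := by
        refine Finset.sum_congr rfl fun k hk => ?_
        rw [Finset.mem_range] at hk
        simp only [hBasis, pow_zero, one_mul, indicator, mem_Ij_iff hε hx (Nat.le_pred_of_lt hk)]
    _ = 1 := by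
        rw [Finset.sum_ite_eq', if_pos (Finset.mem_range.mpr (by omega))]

lemma intervalIntegral_mul_indicator_Icc (g : ℝ → ℝ) {a b c : ℝ} (hb : b ∈ Icc a c) :
    ∫ t in a..c, g t * (Icc a b).indicator (fun _ => (1 : ℝ)) t = ∫ t in a..b, g t := by
  rw [← intervalIntegral.integral_indicator hb]
  refine intervalIntegral.integral_congr fun t ht => ?_
  rw [uIcc_of_le (hb.1.trans hb.2)] at ht
  by_cases htb : t ≤ b
  · simp [htb, ht.1]
  · simp [htb]

theorem Lop_hBasis_outer_general (ε : ℝ) (hε : ε ∈ Set.Ioo (0 : ℝ) 1) (i : ℕ)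
    (x : ℝ) (hx : x ∈ Set.Icc (0 : ℝ) 1) :
    Lop ε (hBasis ε (⌈1 / ε⌉₊ - 1) i) x
      = ((ε ^ (i + 1) - ((⌈1 / ε⌉₊ : ℝ) * ε - 1) ^ (i + 1)) / ((i : ℝ) + 1)) *
        ∑ k ∈ Finset.range ⌈1 / ε⌉₊, hBasis ε k 0 x := by
  obtain ⟨hε0, -⟩ := hε
  have hs := sPt_natCeil_pred_mem_Icc hε0
  have hs_mem : sPt ε (⌈1 / ε⌉₊ - 1) ∈ Icc 0 (min (x + ε) 1) := by
    refine ⟨hs.1, le_min (by linarith [hx.1, hs.2]) ?_⟩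
    simp only [sPt]
    nlinarith [(Nat.cast_nonneg (⌈1 / ε⌉₊ - 1) : (0 : ℝ) ≤ _)]
  have h_width := sPt_sub_sPt_succ ε (⌈1 / ε⌉₊ - 1)
  rw [Nat.sub_add_cancel (one_le_natCeil_one_div hε0)] at h_width
  have h_left : 0 - sPt ε ⌈1 / ε⌉₊ = ⌈1 / ε⌉₊ * ε - 1 := by simp only [sPt]; ring
  rw [sum_hBasis_zero_eq_one hε0 hx, mul_one, Lop]
  simp only [hBasis, Nat.sub_add_cancel (one_le_natCeil_one_div hε0), Ij, if_true]
  rw [intervalIntegral_mul_indicator_Icc (fun t => (t - sPt ε ⌈1 / ε⌉₊) ^ i) hs_mem,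
    intervalIntegral.integral_comp_sub_right (fun t => t ^ i), integral_pow, h_width, h_left]

/-- Outermost case `j = M-1`: `L^ε h_{M-1,i}` is the constant
`(ε^{i+1} - (Mε-1)^{i+1})/(i+1)` on `[0,1]`, i.e. that constant times `∑_{k=0}^{M-1} h_{k,0}`. -/
theorem Lop_hBasis_outer (ε : ℝ) (hε : ε ∈ Set.Ioo (0 : ℝ) 1) (i : ℕ)
    (hi : i ≤ ⌈1 / ε⌉₊ - 1) (x : ℝ) (hx : x ∈ Set.Icc (0 : ℝ) 1) :
    Lop ε (hBasis ε (⌈1 / ε⌉₊ - 1) i) x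
      = ((ε ^ (i + 1) - ((⌈1 / ε⌉₊ : ℝ) * ε - 1) ^ (i + 1)) / ((i : ℝ) + 1)) *
        ∑ k ∈ Finset.range ⌈1 / ε⌉₊, hBasis ε k 0 x :=
  Lop_hBasis_outer_general ε hε i x hx
end

section
/- If ε > p_site, the critical probability for site percolation on ℤ², then the Lightning Model strongly percolates with positive probability: the origin's strongly connected cluster is infinite with positive probability. -/
open MeasureTheory

/-- Strong percolation: the strongly connected cluster of the origin is infinite. -/
def StrongPerc (φ : ℤ × ℤ → ℝ) (ε : ℝ) : Prop :=
  {b : ℤ × ℤ | Reaches φ ε 0 b ∧ Reaches φ ε b 0}.Infinite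

/-- Undirected connectivity within a set `S` of open sites. -/
def SiteConn (S : Set (ℤ × ℤ)) (a b : ℤ × ℤ) : Prop :=
  Relation.ReflTransGen (fun u v => u ∈ S ∧ v ∈ S ∧ LatticeAdj u v) a b

/-- The origin's cluster in Bernoulli site percolation at parameter `p` (realized by
declaring `a` open iff `φ a > 1 - p`, so sites are open i.i.d. with probability `p`)
is infinite. -/
def SitePerc (φ : ℤ × ℤ → ℝ) (p : ℝ) : Prop :=
  {b : ℤ × ℤ | SiteConn {a : ℤ × ℤ | 1 - p < φ a} 0 b}.Infinite

/-- The critical probability of Bernoulli site percolation on `ℤ²` (with respect to the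
i.i.d. uniform coupling `μ`). -/
noncomputable def pSite (μ : Measure ((ℤ × ℤ) → ℝ)) : ℝ :=
  sInf {p : ℝ | 0 ≤ p ∧ p ≤ 1 ∧ 0 < μ {φ | SitePerc φ p}}

/-!
Potentials are almost surely in `(0, 1]`. Then a site `u` with `φ u > 1 - ε` has all of its
outgoing edges open, so along a path of such sites every edge is open in both directions, and
the origin's site cluster at level `ε` lies in its strongly connected cluster. Since `pSite μ < ε`,
some `p < ε` percolates with positive probability, and site percolation is monotone in `p`.
-/

open Set

theorem LatticeAdj.symm {a b : ℤ × ℤ} (h : LatticeAdj a b) : LatticeAdj b a := by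
  unfold LatticeAdj at *
  omega

theorem SiteConn.mono {S T : Set (ℤ × ℤ)} (hST : S ⊆ T) {a b : ℤ × ℤ} (h : SiteConn S a b) :
    SiteConn T a b :=
  Relation.ReflTransGen.mono (fun _ _ ⟨hu, hv, hadj⟩ => ⟨hST hu, hST hv, hadj⟩) _ _ h

theorem SitePerc.mono {φ : ℤ × ℤ → ℝ} {p q : ℝ} (hpq : p ≤ q) (h : SitePerc φ p) :
    SitePerc φ q :=
  Set.Infinite.mono
    (fun _ hb => SiteConn.mono (fun a (ha : 1 - p < φ a) => show 1 - q < φ a by linarith) hb) h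

theorem SiteConn.reaches_and_reaches {φ : ℤ × ℤ → ℝ} {ε : ℝ} {S : Set (ℤ × ℤ)}
    (hS : ∀ u ∈ S, ∀ v, φ v < φ u + ε) {a b : ℤ × ℤ} (h : SiteConn S a b) :
    Reaches φ ε a b ∧ Reaches φ ε b a := by
  induction h with
  | refl => exact ⟨.refl, .refl⟩
  | tail _ step ih =>
    obtain ⟨hc, hb, hadj⟩ := step
    exact ⟨ih.1.tail ⟨hadj, hS _ hc _⟩, Relation.ReflTransGen.head ⟨hadj.symm, hS _ hb _⟩ ih.2⟩

theorem StrongPerc.of_sitePerc {φ : ℤ × ℤ → ℝ} {ε : ℝ} (hle : ∀ a, φ a ≤ 1)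
    (h : SitePerc φ ε) : StrongPerc φ ε :=
  Set.Infinite.mono (fun _ hb => SiteConn.reaches_and_reaches
    (fun u (hu : 1 - ε < φ u) v => (hle v).trans_lt (by linarith)) hb) h

theorem sitePerc_one {φ : ℤ × ℤ → ℝ} (hpos : ∀ a, 0 < φ a) : SitePerc φ 1 := by
  have hopen : ∀ a, a ∈ {a : ℤ × ℤ | 1 - 1 < φ a} := fun a => by simpa using hpos a
  refine infinite_of_injective_forall_mem (f := fun n : ℕ => ((n : ℤ), (0 : ℤ)))
    (fun m n h => by simpa using congrArg Prod.fst h) fun n => ?_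
  induction n with
  | zero => exact .refl
  | succ n ih => exact ih.tail ⟨hopen _, hopen _, by simp [LatticeAdj]⟩

theorem ae_mem_Ioc_of_map_eq_restrict_Icc {Ω : Type*} [MeasurableSpace Ω] {μ : Measure Ω}
    {X : Ω → ℝ} (hX : AEMeasurable X μ) (h : μ.map X = volume.restrict (Icc 0 1)) :
    ∀ᵐ ω ∂μ, X ω ∈ Ioc 0 1 := by
  refine ae_of_ae_map hX ?_
  rw [h, ← Measure.restrict_congr_set Ioc_ae_eq_Icc]
  exact ae_restrict_mem measurableSet_Ioc

theorem strongPerc_of_gt_pSite_general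
    (μ : Measure ((ℤ × ℤ) → ℝ)) [IsProbabilityMeasure μ]
    (hunif : ∀ a : ℤ × ℤ, μ.map (fun φ => φ a) = volume.restrict (Set.Icc (0 : ℝ) 1))
    (ε : ℝ) (hε : pSite μ < ε) :
    0 < μ {φ | StrongPerc φ ε} := by
  have hae : ∀ᵐ φ ∂μ, ∀ a, φ a ∈ Ioc (0 : ℝ) 1 := ae_all_iff.2 fun a =>
    ae_mem_Ioc_of_map_eq_restrict_Icc (measurable_pi_apply a).aemeasurable (hunif a)
  -- `sInf` of the empty set is `0`, so the defining set of `pSite μ` must be shown nonempty.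
  have hone : (1 : ℝ) ∈ {p : ℝ | 0 ≤ p ∧ p ≤ 1 ∧ 0 < μ {φ | SitePerc φ p}} := by
    refine ⟨zero_le_one, le_rfl, ?_⟩
    calc (0 : ENNReal) < μ univ := by simp
      _ ≤ _ := measure_mono_ae (hae.mono fun φ hφ _ => sitePerc_one fun a => (hφ a).1)
  obtain ⟨p, ⟨-, -, hp⟩, hpε⟩ := exists_lt_of_csInf_lt ⟨1, hone⟩ hε
  exact hp.trans_le <| measure_mono_ae <| hae.mono fun φ hφ hperc =>
    StrongPerc.of_sitePerc (fun a => (hφ a).2) (hperc.mono hpε.le)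

/-- If `ε` exceeds the critical probability for site percolation on `ℤ²`, then the
Lightning Model strongly percolates with positive probability. -/
theorem strongPerc_of_gt_pSite
    (μ : Measure ((ℤ × ℤ) → ℝ)) [IsProbabilityMeasure μ]
    (hindep : ProbabilityTheory.iIndepFun
      (fun a φ => φ a) μ)
    (hunif : ∀ a : ℤ × ℤ, μ.map (fun φ => φ a) = volume.restrict (Set.Icc (0 : ℝ) 1))
    (ε : ℝ) (hε1 : ε ≤ 1) (hε : pSite μ < ε) :
    0 < μ {φ | StrongPerc φ ε} :=
  strongPerc_of_gt_pSite_general μ hunif ε hε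
end

section
/- Let 0 < η < 1, ε > 0, and i ≥ 1/ε be a natural number. If φ_a, φ_b ∈ [0,1] satisfy φ_b < φ_a + ε, then (1−η)^i φ_b < (1−η)^{i+1} φ_a + ε. -/
/-- Key inequality showing outward edges in deep layers (`i ≥ 1/ε`) are not broken by
the scaling map `Ψ`: if `φ_a, φ_b ∈ [0,1]` satisfy `φ_b < φ_a + ε`, then
`(1-η)^i φ_b < (1-η)^{i+1} φ_a + ε`. -/
theorem deep_layer_edge_not_broken (η ε : ℝ) (i : ℕ) (hη0 : 0 < η) (hη1 : η < 1)
    (hε : 0 < ε) (hi : 1 / ε ≤ (i : ℝ)) (φa φb : ℝ)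
    (ha : φa ∈ Set.Icc (0 : ℝ) 1) (hb : φb ∈ Set.Icc (0 : ℝ) 1)
    (hedge : φb < φa + ε) :
    (1 - η) ^ i * φb < (1 - η) ^ (i + 1) * φa + ε := by
  obtain ⟨ha0, ha1⟩ := ha
  have hp0 : (0:ℝ) < (1 - η) ^ i := pow_pos (by linarith) i
  have hp1 : (1 - η) ^ i ≤ 1 := pow_le_one₀ (by linarith) (by linarith)
  -- 1 + i*η ≤ (1+η)^i
  have hb1 : 1 + (i:ℝ) * η ≤ (1 + η) ^ i := one_add_mul_le_pow (by linarith) i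
  -- (1+iη)(1-η)^i ≤ ((1+η)(1-η))^i = (1-η^2)^i ≤ 1
  have hmul : (1 + (i:ℝ) * η) * (1 - η) ^ i ≤ 1 := by
    calc (1 + (i:ℝ) * η) * (1 - η) ^ i ≤ (1 + η) ^ i * (1 - η) ^ i := by
          apply mul_le_mul_of_nonneg_right hb1 (le_of_lt hp0)
      _ = ((1 + η) * (1 - η)) ^ i := (mul_pow _ _ _).symm
      _ ≤ 1 ^ i := by
          apply pow_le_pow_left₀ (by nlinarith) (by nlinarith)
      _ = 1 := one_pow i
  have h1 : 1 ≤ ε * (i:ℝ) := by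
    rw [div_le_iff₀ hε] at hi; linarith
  -- η * p * φa ≤ ε * (1 - p)
  have key : η * ((1 - η) ^ i) * φa ≤ ε * (1 - (1 - η) ^ i) := by
    have h2 : (i:ℝ) * η * (1 - η) ^ i ≤ 1 - (1 - η) ^ i := by nlinarith
    have hηp : 0 ≤ η * (1 - η) ^ i := mul_nonneg hη0.le hp0.le
    have h3 : η * ((1 - η) ^ i) * φa ≤ η * (1 - η) ^ i := by
      nlinarith [mul_le_mul_of_nonneg_left ha1 hηp]
    have h4 : η * (1 - η) ^ i ≤ ε * ((i:ℝ) * η * (1 - η) ^ i) := by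
      nlinarith [mul_nonneg hηp (by linarith : (0:ℝ) ≤ ε * (i:ℝ) - 1)]
    nlinarith [mul_le_mul_of_nonneg_left h2 hε.le]
  have hstep : (1 - η) ^ i * φb < (1 - η) ^ i * (φa + ε) :=
    mul_lt_mul_of_pos_left hedge hp0
  have : (1 - η) ^ (i + 1) * φa = (1 - η) ^ i * φa - η * ((1 - η) ^ i) * φa := by
    ring
  nlinarith
end
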